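/- In the erasure game where both players know the state S, the max-min value to Player A is 3/4, attained by Player A playing A=S with probability 1/4 and A=e with probability 3/4 (for each state s). -/

import Mathlib

inductive ActA | a0 | ae | a1
deriving DecidableEq

instance : Fintype ActA where
  elems := {ActA.a0, ActA.ae, ActA.a1}
  complete := by intro x; cases x <;> simp

noncomputable def payoff (M : ℝ) (a : ActA) (b s : Bool) : ℝ :=
  match a with
  | .a0 => if s then -M else (if b then 0 else 3)
  | .a1 => if s then (if b then 3 else 0) else -M
  | .ae => if b = s then 0 else 1

def IsDist {α : Type*} [Fintype α] (p : α → ℝ) : Prop :=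
  (∀ x, 0 ≤ p x) ∧ ∑ x, p x = 1

/-- Expected payoff when both players know the uniform state. -/
noncomputable def expPayAB (M : ℝ) (pa : Bool → ActA → ℝ) (pb : Bool → Bool → ℝ) : ℝ :=
  (1/2) * ∑ s : Bool, ∑ a : ActA, ∑ b : Bool, pa s a * pb s b * payoff M a b s

/-- Player A plays A = S with probability 1/4 and A = e with probability 3/4. -/
noncomputable def paStar : Bool → ActA → ℝ :=
  fun s a => if a = ActA.ae then 3/4 else
    if a = (if s then ActA.a1 else ActA.a0) then 1/4 else 0

/-!
Both optimal strategies are equalizing. Against `paStar`, every action `b` of B earns A exactly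
`3/4` in each state: `1/4 · 3` if `b = s`, `3/4 · 1` otherwise. Against `pbStar`, which guesses
`b = s` with probability `1/4`, the action `a = s` earns `3 · 1/4`, the erasure earns `1 · 3/4`,
and the wrong guess `a = 1 - s` earns `-M ≤ 3/4`. Averaging over mixed strategies and the state
preserves these bounds.
-/

theorem sum_actA (f : ActA → ℝ) : ∑ a, f a = f .a0 + f .ae + f .a1 := by
  rw [show (Finset.univ : Finset ActA) = {.a0, .ae, .a1} from rfl]
  simp only [Finset.mem_insert, Finset.mem_singleton, reduceCtorEq, or_self, not_false_eq_true,
    Finset.sum_insert, Finset.sum_singleton, add_assoc]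

namespace IsDist

variable {α : Type*} [Fintype α] {p f : α → ℝ} {c : ℝ}

theorem sum_mul_le (hp : IsDist p) (hf : ∀ x, f x ≤ c) : ∑ x, p x * f x ≤ c :=
  calc ∑ x, p x * f x ≤ ∑ x, p x * c :=
        Finset.sum_le_sum fun x _ => mul_le_mul_of_nonneg_left (hf x) (hp.1 x)
    _ = c := by rw [← Finset.sum_mul, hp.2, one_mul]

theorem sum_mul_eq (hp : IsDist p) (hf : ∀ x, f x = c) : ∑ x, p x * f x = c := by
  simp_rw [hf, ← Finset.sum_mul, hp.2, one_mul]

end IsDist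

noncomputable def pbStar : Bool → Bool → ℝ :=
  fun s b => if b = s then 1/4 else 3/4

theorem paStar_isDist (s : Bool) : IsDist (paStar s) := by
  refine ⟨fun a => ?_, ?_⟩
  · unfold paStar; split_ifs <;> norm_num
  · rw [sum_actA]; cases s <;> simp [paStar] <;> norm_num

theorem pbStar_isDist (s : Bool) : IsDist (pbStar s) := by
  refine ⟨fun b => ?_, ?_⟩
  · unfold pbStar; split_ifs <;> norm_num
  · rw [Fintype.sum_bool]; cases s <;> norm_num [pbStar]

theorem expPayAB_eq_sum_A (M : ℝ) (pa : Bool → ActA → ℝ) (pb : Bool → Bool → ℝ) :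
    expPayAB M pa pb = 1/2 * ∑ s, ∑ a, pa s a * ∑ b, pb s b * payoff M a b s := by
  simp only [expPayAB, Finset.mul_sum, mul_assoc]

theorem expPayAB_eq_sum_B (M : ℝ) (pa : Bool → ActA → ℝ) (pb : Bool → Bool → ℝ) :
    expPayAB M pa pb = 1/2 * ∑ s, ∑ b, pb s b * ∑ a, pa s a * payoff M a b s := by
  rw [expPayAB_eq_sum_A]
  congr 1
  refine Finset.sum_congr rfl fun s _ => ?_
  simp only [Finset.mul_sum]
  rw [Finset.sum_comm]
  exact Finset.sum_congr rfl fun b _ => Finset.sum_congr rfl fun a _ => by ring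

theorem paStar_payoff_eq (M : ℝ) (s b : Bool) :
    ∑ a, paStar s a * payoff M a b s = 3/4 := by
  rw [sum_actA]; cases s <;> cases b <;> simp [paStar, payoff] <;> norm_num

theorem pbStar_payoff_le {M : ℝ} (hM : 0 ≤ M) (s : Bool) (a : ActA) :
    ∑ b, pbStar s b * payoff M a b s ≤ 3/4 := by
  rw [Fintype.sum_bool]; cases s <;> cases a <;> norm_num [pbStar, payoff] <;> linarith

/-- If both players know the state, the max-min value of the erasure game is 3/4,
attained by playing A = S w.p. 1/4 and A = e w.p. 3/4 (for all large M). -/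
theorem stmt6 : ∃ M0 : ℝ, ∀ M ≥ M0,
    (∀ s, IsDist (paStar s)) ∧
    (∀ pb : Bool → Bool → ℝ, (∀ s, IsDist (pb s)) → expPayAB M paStar pb = 3/4) ∧
    (∀ pa : Bool → ActA → ℝ, (∀ s, IsDist (pa s)) →
      ∃ pb : Bool → Bool → ℝ, (∀ s, IsDist (pb s)) ∧ expPayAB M pa pb ≤ 3/4) := by
  refine ⟨0, fun M hM => ⟨paStar_isDist, fun pb hpb => ?_, fun pa hpa => ?_⟩⟩
  · have hstate s := (hpb s).sum_mul_eq (paStar_payoff_eq M s)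
    rw [expPayAB_eq_sum_B, Fintype.sum_bool, hstate, hstate]
    norm_num
  · refine ⟨pbStar, pbStar_isDist, ?_⟩
    have hstate s := (hpa s).sum_mul_le (pbStar_payoff_le hM s)
    rw [expPayAB_eq_sum_A, Fintype.sum_bool]
    linarith [hstate true, hstate false]
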